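/- Let n ≥ 3, λ > 0 and let u : [0,1] → ℝ be a nontrivial C² solution of u'' + ((n-1)/r) u' + λ u + |u|^{4/(n-2)} u = 0 on (0,1) with u'(0)=0. If 0 ≤ r₁ ≤ r₂ < 1 are two points in the same nodal region (i.e. u has no zero in [r₁, r₂]) with |u(r₁)| ≤ |u(r₂)| and u'(r₁) = u'(r₂) = 0, then r₁ = r₂. -/

import Mathlib

open Set Filter Topology

/-!
Multiplying the equation by `u'` shows that the energy `u'² / 2 + λ u² / 2 + |u|^{2*} / 2*`
has derivative `-((n - 1) / r) u'²`, so it is nonincreasing. At a critical point the energy only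
depends on `|u|`, increasingly, so `|u(r₁)| ≤ |u(r₂)|` forces it to be constant on `[r₁, r₂]`.
Then `u' ≡ 0` there, hence `u'' ≡ 0`, and the equation leaves `u (λ + |u|^{2* - 2}) = 0`, which
is impossible where `u ≠ 0`. When `r₁ = 0`, the one-sided derivative `u'(0)` vanishes because
`((n - 1) / r) u'(r)` stays bounded as `r → 0⁺`.
-/

section IccDerivatives

variable {u : ℝ → ℝ} {a b t : ℝ}

lemma hasDerivAt_derivWithin_Icc (hu : DifferentiableOn ℝ u (Icc a b)) (ht : t ∈ Ioo a b) :
    HasDerivAt u (derivWithin u (Icc a b) t) t :=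
  (hu t (Ioo_subset_Icc_self ht)).hasDerivWithinAt.hasDerivAt (Icc_mem_nhds ht.1 ht.2)

lemma deriv_eq_derivWithin_Icc (ht : t ∈ Ioo a b) : deriv u t = derivWithin u (Icc a b) t :=
  (derivWithin_of_mem_nhds (Icc_mem_nhds ht.1 ht.2)).symm

lemma deriv_deriv_eq_derivWithin_Icc (ht : t ∈ Ioo a b) :
    deriv (deriv u) t = derivWithin (derivWithin u (Icc a b)) (Icc a b) t := by
  have hloc : deriv u =ᶠ[𝓝 t] derivWithin u (Icc a b) :=
    eventually_of_mem (isOpen_Ioo.mem_nhds ht) fun _ hs => deriv_eq_derivWithin_Icc hs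
  rw [hloc.deriv_eq, deriv_eq_derivWithin_Icc ht]

end IccDerivatives

/-- Near the origin `v r = -r g r / k → 0`. -/
lemma eq_zero_of_continuousWithinAt_of_singular_ode {v g : ℝ → ℝ} {k : ℝ} (hk : k ≠ 0)
    (hv : ContinuousWithinAt v (Ioi 0) 0) (hg : ContinuousWithinAt g (Ioi 0) 0)
    (hode : ∀ᶠ r in 𝓝[>] 0, g r + k / r * v r = 0) : v 0 = 0 := by
  have hfactor : (fun r => r * (-g r / k)) =ᶠ[𝓝[>] 0] v := by
    filter_upwards [hode, self_mem_nhdsWithin] with r hr (hr0 : 0 < r)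
    field_simp at hr ⊢
    linarith
  have hlim : Tendsto (fun r => r * (-g r / k)) (𝓝[>] 0) (𝓝 (0 * (-g 0 / k))) :=
    (tendsto_nhdsWithin_of_tendsto_nhds tendsto_id).mul (hg.neg.div_const k)
  rw [zero_mul] at hlim
  exact tendsto_nhds_unique hv (hlim.congr' hfactor)

lemma AntitoneOn.eq_left_of_le {E : ℝ → ℝ} {a b t : ℝ} (hE : AntitoneOn E (Icc a b))
    (hab : E a ≤ E b) (ht : t ∈ Icc a b) : E t = E a := by
  have hle : a ≤ b := ht.1.trans ht.2
  exact le_antisymm (hE (left_mem_Icc.2 hle) ht ht.1)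
    (hab.trans (hE ht (right_mem_Icc.2 hle) ht.2))

namespace RadialODE

noncomputable def energy (F u v : ℝ → ℝ) (r : ℝ) : ℝ := v r ^ 2 / 2 + F (u r)

lemma hasDerivAt_energy {F u v : ℝ → ℝ} {t v' f' : ℝ} (hu : HasDerivAt u (v t) t)
    (hv : HasDerivAt v v' t) (hF : HasDerivAt F f' (u t)) :
    HasDerivAt (energy F u v) (v t * (v' + f')) t :=
  (((hv.pow 2).div_const 2).add (hF.comp t hu)).congr_deriv (by ring)

section Monotonicity

variable {F f u v w : ℝ → ℝ} {k a b : ℝ}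
  (hu : ∀ t ∈ Ioo a b, HasDerivAt u (v t) t) (hv : ∀ t ∈ Ioo a b, HasDerivAt v (w t) t)
  (hF : ∀ s, HasDerivAt F (f s) s) (hode : ∀ t ∈ Ioo a b, w t + k / t * v t + f (u t) = 0)
include hu hv hF hode

lemma hasDerivAt_energy_of_ode {t : ℝ} (ht : t ∈ Ioo a b) :
    HasDerivAt (energy F u v) (-(k / t) * v t ^ 2) t := by
  convert hasDerivAt_energy (hu t ht) (hv t ht) (hF (u t)) using 1
  linear_combination (-v t) * hode t ht

lemma antitoneOn_energy (ha : 0 ≤ a) (hk : 0 ≤ k)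
    (hcont : ContinuousOn (energy F u v) (Icc a b)) : AntitoneOn (energy F u v) (Icc a b) := by
  refine antitoneOn_of_hasDerivWithinAt_nonpos (f' := fun t => -(k / t) * v t ^ 2)
    (convex_Icc a b) hcont (fun t ht => ?_) (fun t ht => ?_) <;> rw [interior_Icc] at ht
  · exact (hasDerivAt_energy_of_ode hu hv hF hode ht).hasDerivWithinAt
  · have : 0 ≤ k / t * v t ^ 2 := by
      have := ha.trans_lt ht.1
      positivity
    linarith

/-- The energy is nonincreasing, so if it does not drop between the endpoints it is constant, and
its derivative `-(k / t) v²` vanishes. -/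
lemma eq_zero_of_energy_le (ha : 0 ≤ a) (hk : 0 < k)
    (hcont : ContinuousOn (energy F u v) (Icc a b)) (hab : energy F u v a ≤ energy F u v b) :
    ∀ t ∈ Ioo a b, v t = 0 := by
  intro t ht
  have hanti := antitoneOn_energy hu hv hF hode ha hk.le hcont
  have hconst : energy F u v =ᶠ[𝓝 t] fun _ => energy F u v a :=
    eventually_of_mem (isOpen_Ioo.mem_nhds ht) fun s hs =>
      hanti.eq_left_of_le hab (Ioo_subset_Icc_self hs)
  have hzero := (hasDerivAt_energy_of_ode hu hv hF hode ht).unique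
    ((hasDerivAt_const t _).congr_of_eventuallyEq hconst)
  have hkt : k / t ≠ 0 := (div_pos hk (ha.trans_lt ht.1)).ne'
  simpa [hkt] using hzero

end Monotonicity

end RadialODE

namespace BrezisNirenberg

/-- The Brezis–Nirenberg equation is the critical case `q = 2* - 2 = 4 / (n - 2)`. -/
noncomputable def force (lam q s : ℝ) : ℝ := lam * s + |s| ^ q * s

noncomputable def potential (lam q s : ℝ) : ℝ := lam * s ^ 2 / 2 + |s| ^ (q + 2) / (q + 2)

variable {lam q : ℝ}

lemma hasDerivAt_potential (hq : -1 < q) (s : ℝ) :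
    HasDerivAt (potential lam q) (force lam q s) s := by
  have hq2 : q + 2 ≠ 0 := by linarith
  refine ((((hasDerivAt_pow 2 s).const_mul lam).div_const 2).add
    ((hasDerivAt_abs_rpow s (by linarith : 1 < q + 2)).div_const (q + 2))).congr_deriv ?_
  rw [force, add_sub_cancel_right]
  field_simp
  ring

lemma continuous_potential (hq : -1 < q) : Continuous (potential lam q) :=
  continuous_iff_continuousAt.2 fun s => (hasDerivAt_potential hq s).continuousAt

lemma continuous_force (hq : 0 ≤ q) : Continuous (force lam q) := by
  unfold force
  fun_prop (disch := exact hq)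

lemma potential_le_potential (hlam : 0 ≤ lam) (hq : -2 < q) {s t : ℝ} (hst : |s| ≤ |t|) :
    potential lam q s ≤ potential lam q t := by
  have hsq : s ^ 2 ≤ t ^ 2 := sq_le_sq.2 hst
  have hpow : |s| ^ (q + 2) ≤ |t| ^ (q + 2) :=
    Real.rpow_le_rpow (abs_nonneg s) hst (by linarith)
  unfold potential
  gcongr
  linarith

lemma force_ne_zero (hlam : 0 < lam) {s : ℝ} (hs : s ≠ 0) : force lam q s ≠ 0 := by
  have : 0 < lam + |s| ^ q := by positivity
  rw [force, show lam * s + |s| ^ q * s = s * (lam + |s| ^ q) by ring]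
  exact mul_ne_zero hs this.ne'

section RadialSolution

variable {k lam q : ℝ} {u : ℝ → ℝ}
  (hode : ∀ r ∈ Ioo (0 : ℝ) 1, deriv (deriv u) r + k / r * deriv u r + force lam q (u r) = 0)
include hode

lemma force_eq_zero_of_deriv_eventuallyEq_zero {t : ℝ} (ht : t ∈ Ioo 0 1)
    (hflat : deriv u =ᶠ[𝓝 t] 0) : force lam q (u t) = 0 := by
  simpa [hflat.deriv_eq, hflat.eq_of_nhds] using hode t ht

lemma ode_derivWithin_Icc {t : ℝ} (ht : t ∈ Ioo 0 1) :
    derivWithin (derivWithin u (Icc 0 1)) (Icc 0 1) t + k / t * derivWithin u (Icc 0 1) t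
      + force lam q (u t) = 0 := by
  rw [← deriv_deriv_eq_derivWithin_Icc ht, ← deriv_eq_derivWithin_Icc ht]
  exact hode t ht

variable (hu : ContDiffOn ℝ 2 u (Icc 0 1))
include hu

lemma derivWithin_Icc_zero_eq_zero (hk : k ≠ 0) (hq : 0 ≤ q) :
    derivWithin u (Icc 0 1) 0 = 0 := by
  have hv : ContDiffOn ℝ 1 (derivWithin u (Icc 0 1)) (Icc 0 1) :=
    hu.derivWithin (uniqueDiffOn_Icc one_pos) (by norm_num)
  have hIcc : Icc (0 : ℝ) 1 ∈ 𝓝[>] 0 := Icc_mem_nhdsGT one_pos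
  have hrhs : ContinuousOn (fun t => derivWithin (derivWithin u (Icc 0 1)) (Icc 0 1) t
      + force lam q (u t)) (Icc 0 1) :=
    (hv.continuousOn_derivWithin (uniqueDiffOn_Icc one_pos) le_rfl).add
      ((continuous_force hq).comp_continuousOn hu.continuousOn)
  refine eq_zero_of_continuousWithinAt_of_singular_ode hk
    ((hv.continuousOn 0 (left_mem_Icc.2 zero_le_one)).mono_of_mem_nhdsWithin hIcc)
    ((hrhs 0 (left_mem_Icc.2 zero_le_one)).mono_of_mem_nhdsWithin hIcc) ?_
  filter_upwards [Ioo_mem_nhdsGT one_pos] with t ht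
  linarith [ode_derivWithin_Icc hode ht]

/-- `deriv u 0` carries no information when `u` is only controlled on `[0, 1]`, so the energy is
built from the one-sided derivative `derivWithin u (Icc 0 1)`. -/
lemma deriv_eq_zero_of_abs_le {r₁ r₂ : ℝ} (hk : 0 < k) (hlam : 0 ≤ lam) (hq : 0 ≤ q)
    (h01 : 0 ≤ r₁) (h12 : r₁ < r₂) (h21 : r₂ < 1) (hd1 : deriv u r₁ = 0) (hd2 : deriv u r₂ = 0)
    (habs : |u r₁| ≤ |u r₂|) : ∀ t ∈ Ioo r₁ r₂, deriv u t = 0 := by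
  set v := derivWithin u (Icc 0 1)
  have hv : ContDiffOn ℝ 1 v (Icc 0 1) :=
    hu.derivWithin (uniqueDiffOn_Icc one_pos) (by norm_num)
  have hsub : Ioo r₁ r₂ ⊆ Ioo 0 1 := Ioo_subset_Ioo h01 h21.le
  have hsub' : Icc r₁ r₂ ⊆ Icc 0 1 := Icc_subset_Icc h01 h21.le
  have hv₁ : v r₁ = 0 := by
    rcases h01.eq_or_lt with h | h
    · rw [← h]; exact derivWithin_Icc_zero_eq_zero hode hu hk.ne' hq
    · exact (deriv_eq_derivWithin_Icc ⟨h, by linarith⟩).symm.trans hd1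
  have hv₂ : v r₂ = 0 := (deriv_eq_derivWithin_Icc ⟨by linarith, h21⟩).symm.trans hd2
  have hflat : ∀ t ∈ Ioo r₁ r₂, v t = 0 := by
    refine RadialODE.eq_zero_of_energy_le (F := potential lam q)
      (fun t ht => hasDerivAt_derivWithin_Icc (hu.differentiableOn two_ne_zero) (hsub ht))
      (fun t ht => hasDerivAt_derivWithin_Icc (hv.differentiableOn one_ne_zero) (hsub ht))
      (hasDerivAt_potential (by linarith)) (fun t ht => ode_derivWithin_Icc hode (hsub ht))
      h01 hk ?_ ?_
    · exact (((hv.continuousOn.mono hsub').pow 2).div_const 2).add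
        ((continuous_potential (by linarith)).comp_continuousOn (hu.continuousOn.mono hsub'))
    · simpa [RadialODE.energy, hv₁, hv₂] using potential_le_potential hlam (by linarith) habs
  intro t ht
  exact (deriv_eq_derivWithin_Icc (hsub ht)).trans (hflat t ht)

end RadialSolution

end BrezisNirenberg

theorem critical_points_coincide_general (n : ℕ) (hn : 3 ≤ n) (lam : ℝ) (hlam : 0 < lam)
    (u : ℝ → ℝ) (hu : ContDiffOn ℝ 2 u (Set.Icc 0 1))
    (hode : ∀ r ∈ Set.Ioo (0:ℝ) 1,
      deriv (deriv u) r + (((n:ℝ) - 1) / r) * deriv u r + lam * u r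
        + |u r| ^ ((4:ℝ) / ((n:ℝ) - 2)) * u r = 0)
    (r₁ r₂ : ℝ) (h01 : 0 ≤ r₁) (h12 : r₁ ≤ r₂) (h21 : r₂ < 1)
    (hnodal : ∀ r ∈ Set.Icc r₁ r₂, u r ≠ 0)
    (habs : |u r₁| ≤ |u r₂|)
    (hd1 : deriv u r₁ = 0) (hd2 : deriv u r₂ = 0) :
    r₁ = r₂ := by
  have hn' : (3 : ℝ) ≤ n := by exact_mod_cast hn
  have hq : 0 < (4 : ℝ) / ((n : ℝ) - 2) := div_pos four_pos (by linarith)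
  have hode' : ∀ r ∈ Ioo (0 : ℝ) 1, deriv (deriv u) r + ((n : ℝ) - 1) / r * deriv u r
      + BrezisNirenberg.force lam (4 / ((n : ℝ) - 2)) (u r) = 0 := fun r hr => by
    rw [BrezisNirenberg.force]; linarith [hode r hr]
  by_contra hne
  have hlt : r₁ < r₂ := h12.lt_of_ne hne
  have hflat := BrezisNirenberg.deriv_eq_zero_of_abs_le hode' hu (by linarith) hlam.le hq.le
    h01 hlt h21 hd1 hd2 habs
  obtain ⟨m, hm⟩ := nonempty_Ioo.2 hlt
  have hforce := BrezisNirenberg.force_eq_zero_of_deriv_eventuallyEq_zero hode'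
    (Ioo_subset_Ioo h01 h21.le hm) (eventually_of_mem (isOpen_Ioo.mem_nhds hm) hflat)
  exact BrezisNirenberg.force_ne_zero hlam (hnodal m (Ioo_subset_Icc_self hm)) hforce

/-- two critical points in the same nodal region with ordered
absolute values must coincide. -/
theorem critical_points_coincide (n : ℕ) (hn : 3 ≤ n) (lam : ℝ) (hlam : 0 < lam)
    (u : ℝ → ℝ) (hu : ContDiffOn ℝ 2 u (Set.Icc 0 1))
    (hnontriv : ¬ ∀ r ∈ Set.Icc (0:ℝ) 1, u r = 0)
    (hode : ∀ r ∈ Set.Ioo (0:ℝ) 1,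
      deriv (deriv u) r + (((n:ℝ) - 1) / r) * deriv u r + lam * u r
        + |u r| ^ ((4:ℝ) / ((n:ℝ) - 2)) * u r = 0)
    (hu0 : deriv u 0 = 0)
    (r₁ r₂ : ℝ) (h01 : 0 ≤ r₁) (h12 : r₁ ≤ r₂) (h21 : r₂ < 1)
    (hnodal : ∀ r ∈ Set.Icc r₁ r₂, u r ≠ 0)
    (habs : |u r₁| ≤ |u r₂|)
    (hd1 : deriv u r₁ = 0) (hd2 : deriv u r₂ = 0) :
    r₁ = r₂ :=
  critical_points_coincide_general n hn lam hlam u hu hode r₁ r₂ h01 h12 h21 hnodal habs hd1 hd2
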